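/- Let j(3) be the Lie algebra with [e¹,e²]* = e², [e²,e³]* = 0, [e¹,e³]* = e³. The r-matrix r* = e¹∧e³ induces on its dual the brackets [e₁,e₂]' = 0, [e₁,e₃]' = e₁, [e₂,e₃]' = −e₂, and the linear map S: e₁ ↦ e₁+e₂, e₂ ↦ e₁−e₂, e₃ ↦ −e₃ transforms this bracket into the p(2) bracket [e₂,e₃] = −e₁, [e₃,e₁] = e₂, [e₁,e₂] = 0, i.e. [Sx, Sy]_{p(2)} = S([x,y]'). -/
import Mathlib


noncomputable section

/-- `e i` is the `i`-th standard basis vector (also used for the dual basis `eⁱ`). -/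
def e (i : Fin 3) : Fin 3 → ℂ := fun j => if j = i then 1 else 0

/-- Bilinear bracket determined by structure constants `c`: `[e i, e j] = ∑ k, c i j k • e k`. -/
def bra (c : Fin 3 → Fin 3 → Fin 3 → ℂ) (x y : Fin 3 → ℂ) : Fin 3 → ℂ :=
  fun k => ∑ i, ∑ j, x i * y j * c i j k

/-- Coordinates of the cobracket `δ(x) = [x⊗1 + 1⊗x, r]` where the r-matrix has
coordinates `ρ`, i.e. `r = ∑ ρ i j • e i ⊗ e j`. -/
def cob (c : Fin 3 → Fin 3 → Fin 3 → ℂ) (ρ : Fin 3 → Fin 3 → ℂ) (x : Fin 3 → ℂ) :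
    Fin 3 → Fin 3 → ℂ :=
  fun a b => ∑ i, ∑ j, ρ i j * (bra c x (e i) a * e j b + e i a * bra c x (e j) b)

/-- The induced bracket on the dual space: `⟨[ξ,η]*, e k⟩ = ⟨ξ ⊗ η, δ(e k)⟩`. -/
def dbra (c : Fin 3 → Fin 3 → Fin 3 → ℂ) (ρ : Fin 3 → Fin 3 → ℂ) (ξ η : Fin 3 → ℂ) :
    Fin 3 → ℂ :=
  fun k => ∑ a, ∑ b, ξ a * η b * cob c ρ (e k) a b

/-- Coordinates of the Schouten bracket
`[r,r]ₛ = [r₁₂,r₁₃] + [r₁₂,r₂₃] + [r₁₃,r₂₃]` in `L⊗L⊗L`. -/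
def sch (c : Fin 3 → Fin 3 → Fin 3 → ℂ) (ρ : Fin 3 → Fin 3 → ℂ) :
    Fin 3 → Fin 3 → Fin 3 → ℂ :=
  fun p q s => ∑ i, ∑ j, ∑ k, ∑ l, ρ i j * ρ k l *
    (c i k p * e j q * e l s + e i p * c j k q * e l s + e i p * e k q * c j l s)

/-- Structure constants of `j(3)`: `[e¹,e²]* = e²`, `[e²,e³]* = 0`, `[e¹,e³]* = e³`. -/
def cj : Fin 3 → Fin 3 → Fin 3 → ℂ := fun i j k =>
  (if i = 0 ∧ j = 1 ∧ k = 1 then 1 else if i = 0 ∧ j = 2 ∧ k = 2 then 1 else 0)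
  - (if j = 0 ∧ i = 1 ∧ k = 1 then 1 else if j = 0 ∧ i = 2 ∧ k = 2 then 1 else 0)

/-- The r-matrix `r* = e¹∧e³`. -/
def ρj : Fin 3 → Fin 3 → ℂ := fun p q =>
  if p = 0 ∧ q = 2 then 1 else if p = 2 ∧ q = 0 then -1 else 0

/-- Structure constants of `p(2)`: `[e₂,e₃] = −e₁`, `[e₃,e₁] = e₂`, `[e₁,e₂] = 0`. -/
def cp2 : Fin 3 → Fin 3 → Fin 3 → ℂ := fun i j k =>
  (if i = 1 ∧ j = 2 ∧ k = 0 then -1 else if i = 2 ∧ j = 0 ∧ k = 1 then 1 else 0)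
  - (if j = 1 ∧ i = 2 ∧ k = 0 then -1 else if j = 2 ∧ i = 0 ∧ k = 1 then 1 else 0)

/-- The map `S : e₁ ↦ e₁+e₂, e₂ ↦ e₁−e₂, e₃ ↦ −e₃`. -/
def S : (Fin 3 → ℂ) → (Fin 3 → ℂ) := fun x => ![x 0 + x 1, x 0 - x 1, -x 2]

/-- The r-matrix `r* = e¹∧e³` on `j(3)` induces on its dual the brackets
`[e₁,e₂]' = 0`, `[e₁,e₃]' = e₁`, `[e₂,e₃]' = −e₂`, and the linear map
`S : e₁ ↦ e₁+e₂, e₂ ↦ e₁−e₂, e₃ ↦ −e₃` transforms this bracket into the `p(2)`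
bracket: `[Sx, Sy]_{p(2)} = S [x,y]'`. -/
theorem j3_dual_and_transform :
    dbra cj ρj (e 0) (e 1) = 0 ∧
    dbra cj ρj (e 0) (e 2) = e 0 ∧
    dbra cj ρj (e 1) (e 2) = (fun k => -(e 1 k)) ∧
    ∀ x y : Fin 3 → ℂ, bra cp2 (S x) (S y) = S (dbra cj ρj x y) := by

  refine ⟨?_, ?_, ?_, ?_⟩
  · funext k
    fin_cases k <;>
      simp [dbra, cob, bra, cj, ρj, e, Fin.sum_univ_three] <;> norm_num
  · funext k
    fin_cases k <;>
      simp [dbra, cob, bra, cj, ρj, e, Fin.sum_univ_three] <;> norm_num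
  · funext k
    fin_cases k <;>
      simp [dbra, cob, bra, cj, ρj, e, Fin.sum_univ_three] <;> norm_num
  · intro x y
    funext k
    fin_cases k <;>
      simp [dbra, cob, bra, cj, cp2, ρj, S, e, Fin.sum_univ_three] <;> ring
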